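/- arXiv:2311.00920 — 5 statements merged into one kernel-verified Lean document; each statement's English description precedes it below -/
import Mathlib

section
/- In the setting of gluing cosilting objects: let (T₁, T, T₂) be a recollement, C₁ a cosilting object of T₁, C₂ a cosilting object of T₂, and suppose there is a triangle V → i_*(C₁) → U → V[1] with V ∈ j_*(^{⊥_{≥0}}C₂) and U ∈ (j_*(^{⊥_{≥0}}C₂))^⊥. Then C₁ ≅ i^!(U). -/
open CategoryTheory Category Limits Pretriangulated

universe v u

section Defs

variable (C : Type u) [Category.{v} C] [HasZeroObject C] [HasShift C ℤ] [Preadditive C]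
  [∀ n : ℤ, (CategoryTheory.shiftFunctor C n).Additive] [Pretriangulated C]

/-- A class of objects is closed under direct summands. -/
def ClosedUnderSummands (S : Set C) : Prop :=
  ∀ ⦃Z X : C⦄, Z ∈ S → ∀ (s : X ⟶ Z) (r : Z ⟶ X), s ≫ r = 𝟙 X → X ∈ S

/-- A torsion pair in a triangulated category. -/
structure IsTorsionPair (U V : Set C) : Prop where
  closedU : ClosedUnderSummands C U
  closedV : ClosedUnderSummands C V
  hom_zero : ∀ ⦃X Y : C⦄, X ∈ U → Y ∈ V → ∀ f : X ⟶ Y, f = 0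
  exists_triangle : ∀ T : C, ∃ (X Y : C) (_ : X ∈ U) (_ : Y ∈ V)
    (f : X ⟶ T) (g : T ⟶ Y) (h : Y ⟶ X⟦(1 : ℤ)⟧),
      Triangle.mk f g h ∈ distTriang C

/-- The shift of a class of objects: `shiftSet S n` plays the role of `S[n]`. -/
def shiftSet (S : Set C) (n : ℤ) : Set C := {X : C | X⟦-n⟧ ∈ S}

/-- A `t`-structure `(X, Y)`: `(X, Y[-1])` is a torsion pair and `X[1] ⊆ X`. -/
structure IsTStructure (X Y : Set C) : Prop where
  torsion : IsTorsionPair C X (shiftSet C Y (-1))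
  shift_le : shiftSet C X 1 ⊆ X

/-- A co-`t`-structure `(A, B)`: `(A[-1], B)` is a torsion pair and `A[-1] ⊆ A`. -/
structure IsCoTStructure (A B : Set C) : Prop where
  torsion : IsTorsionPair C (shiftSet C A (-1)) B
  shift_ge : shiftSet C A (-1) ⊆ A

/-- `^{⊥_{<0}}M`. -/
def perpLt (M : C) : Set C := {X : C | ∀ k : ℤ, k < 0 → ∀ f : X ⟶ M⟦k⟧, f = 0}

/-- `^{⊥_{>0}}M`. -/
def perpGt (M : C) : Set C := {X : C | ∀ k : ℤ, 0 < k → ∀ f : X ⟶ M⟦k⟧, f = 0}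

/-- `^{⊥_{≥0}}M`. -/
def perpGe (M : C) : Set C := {X : C | ∀ k : ℤ, 0 ≤ k → ∀ f : X ⟶ M⟦k⟧, f = 0}

/-- A cosilting object. -/
def IsCosilting (M : C) : Prop := IsTStructure C (perpLt C M) (perpGt C M)

/-- The right Hom-orthogonal `S^⊥` of a class of objects. -/
def rightPerp (S : Set C) : Set C := {X : C | ∀ Y ∈ S, ∀ f : Y ⟶ X, f = 0}

/-- `X` is a direct summand (retract) of `Z`. -/
def IsRetract {D : Type u} [Category.{v} D] (X Z : D) : Prop :=
  ∃ (s : X ⟶ Z) (r : Z ⟶ X), s ≫ r = 𝟙 X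

/-- `Prod(M)`: direct summands of (existing) products of copies of `M`. -/
def ProdClass (M : C) : Set C :=
  {X : C | ∃ (ι : Type v) (c : Fan (fun _ : ι => M)), Nonempty (IsLimit c) ∧ IsRetract X c.pt}

/-- The extension class `A * B`. -/
def star (A B : Set C) : Set C :=
  {E : C | ∃ (a b : C) (_ : a ∈ A) (_ : b ∈ B) (f : a ⟶ E) (g : E ⟶ b)
    (h : b ⟶ a⟦(1 : ℤ)⟧), Triangle.mk f g h ∈ distTriang C}

end Defs

section Rec

variable (T₁ : Type u) [Category.{v} T₁] [HasZeroObject T₁] [HasShift T₁ ℤ] [Preadditive T₁]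
  [∀ n : ℤ, (CategoryTheory.shiftFunctor T₁ n).Additive] [Pretriangulated T₁]
variable (T : Type u) [Category.{v} T] [HasZeroObject T] [HasShift T ℤ] [Preadditive T]
  [∀ n : ℤ, (CategoryTheory.shiftFunctor T n).Additive] [Pretriangulated T]
variable (T₂ : Type u) [Category.{v} T₂] [HasZeroObject T₂] [HasShift T₂ ℤ] [Preadditive T₂]
  [∀ n : ℤ, (CategoryTheory.shiftFunctor T₂ n).Additive] [Pretriangulated T₂]

/-- A recollement of triangulated categories `(T₁, T, T₂)`. The functors are
`iS = i_* = i_!`, `iU = i^*`, `iE = i^!`, `jE = j_!`, `jU = j^* = j^!`, `jS = j_*`. -/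
structure Recollement where
  iS : T₁ ⥤ T
  iU : T ⥤ T₁
  iE : T ⥤ T₁
  jE : T₂ ⥤ T
  jU : T ⥤ T₂
  jS : T₂ ⥤ T
  adj₁ : iU ⊣ iS
  adj₂ : iS ⊣ iE
  adj₃ : jE ⊣ jU
  adj₄ : jU ⊣ jS
  iS_faithful : iS.Faithful
  iS_full : iS.Full
  jE_faithful : jE.Faithful
  jE_full : jE.Full
  jS_faithful : jS.Faithful
  jS_full : jS.Full
  iS_commShift : iS.CommShift ℤ
  iU_commShift : iU.CommShift ℤ
  iE_commShift : iE.CommShift ℤ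
  jE_commShift : jE.CommShift ℤ
  jU_commShift : jU.CommShift ℤ
  jS_commShift : jS.CommShift ℤ
  iS_triangulated : letI := iS_commShift; iS.IsTriangulated
  iU_triangulated : letI := iU_commShift; iU.IsTriangulated
  iE_triangulated : letI := iE_commShift; iE.IsTriangulated
  jE_triangulated : letI := jE_commShift; jE.IsTriangulated
  jU_triangulated : letI := jU_commShift; jU.IsTriangulated
  jS_triangulated : letI := jS_commShift; jS.IsTriangulated
  iE_jS_zero : ∀ X : T₂, IsZero (iE.obj (jS.obj X))
  tri₁ : ∀ X : T, ∃ h : jS.obj (jU.obj X) ⟶ (iS.obj (iE.obj X))⟦(1 : ℤ)⟧,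
    Triangle.mk (adj₂.counit.app X) (adj₄.unit.app X) h ∈ distTriang T
  tri₂ : ∀ X : T, ∃ h : iS.obj (iU.obj X) ⟶ (jE.obj (jU.obj X))⟦(1 : ℤ)⟧,
    Triangle.mk (adj₃.counit.app X) (adj₁.unit.app X) h ∈ distTriang T

end Rec

section DGEdef
variable (C : Type u) [Category.{v} C] [Preadditive C] [HasShift C ℤ]

/-- `D^{≥ n}`: objects `Z` with `Hom(R, Z[i]) = 0` for `i < n`, where `R` is the ring
(a compact generator). -/
def DGE (Rg : C) (n : ℤ) : Set C := {Z : C | ∀ i : ℤ, i < n → ∀ f : Rg ⟶ Z⟦i⟧, f = 0}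

end DGEdef

section Statement

variable (T₁ : Type u) [Category.{v} T₁] [HasZeroObject T₁] [HasShift T₁ ℤ] [Preadditive T₁]
  [∀ n : ℤ, (CategoryTheory.shiftFunctor T₁ n).Additive] [Pretriangulated T₁]
variable (T : Type u) [Category.{v} T] [HasZeroObject T] [HasShift T ℤ] [Preadditive T]
  [∀ n : ℤ, (CategoryTheory.shiftFunctor T n).Additive] [Pretriangulated T]
variable (T₂ : Type u) [Category.{v} T₂] [HasZeroObject T₂] [HasShift T₂ ℤ] [Preadditive T₂]
  [∀ n : ℤ, (CategoryTheory.shiftFunctor T₂ n).Additive] [Pretriangulated T₂]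

/-- In the gluing triangle `V → i_*(C₁) → U → V[1]`, one has `C₁ ≅ i^!(U)`. -/
theorem gluable_pair_iE_U (R : Recollement T₁ T T₂) (C₁ : T₁) (C₂ : T₂)
    (hC₁ : IsCosilting T₁ C₁) (hC₂ : IsCosilting T₂ C₂)
    (V U : T) (f : V ⟶ R.iS.obj C₁) (g : R.iS.obj C₁ ⟶ U) (w : U ⟶ V⟦(1 : ℤ)⟧)
    (hdist : Triangle.mk f g w ∈ distTriang T)
    (hV : V ∈ R.jS.obj '' perpGe T₂ C₂)
    (hU : U ∈ rightPerp T (R.jS.obj '' perpGe T₂ C₂)) :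
    Nonempty (C₁ ≅ R.iE.obj U) := by
  letI := R.iE_commShift
  haveI := R.iE_triangulated
  have hdist' := R.iE.map_distinguished _ hdist
  have hz : IsZero (R.iE.obj V) := by
    obtain ⟨X, -, rfl⟩ := hV
    exact R.iE_jS_zero X
  have hiso : IsIso (R.iE.map g) :=
    (Triangle.isZero₁_iff_isIso₂ _ hdist').1 hz
  haveI := R.iS_full
  haveI := R.iS_faithful
  haveI : IsIso (R.adj₂.unit.app C₁) := inferInstance
  exact ⟨asIso (R.adj₂.unit.app C₁) ≪≫ asIso (R.iE.map g)⟩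

end Statement
end

section
/- In the setting of gluing cosilting objects, the triangle V → i_*(C₁) → U → V[1] (with V ∈ j_*(^{⊥_{≥0}}C₂), U ∈ (j_*(^{⊥_{≥0}}C₂))^⊥) is isomorphic to the canonical recollement triangle j_* j^*(U)[-1] → i_* i^!(U) → U → j_* j^*(U). In particular V ≅ j_* j^*(U)[-1] and i_*(C₁) ≅ i_* i^!(U). -/
open CategoryTheory Category Limits Pretriangulated

universe v u

section Statement

variable (T₁ : Type u) [Category.{v} T₁] [HasZeroObject T₁] [HasShift T₁ ℤ] [Preadditive T₁]
  [∀ n : ℤ, (CategoryTheory.shiftFunctor T₁ n).Additive] [Pretriangulated T₁]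
variable (T : Type u) [Category.{v} T] [HasZeroObject T] [HasShift T ℤ] [Preadditive T]
  [∀ n : ℤ, (CategoryTheory.shiftFunctor T n).Additive] [Pretriangulated T]
variable (T₂ : Type u) [Category.{v} T₂] [HasZeroObject T₂] [HasShift T₂ ℤ] [Preadditive T₂]
  [∀ n : ℤ, (CategoryTheory.shiftFunctor T₂ n).Additive] [Pretriangulated T₂]

/-- The gluing triangle is isomorphic to the (inverse rotation of the) canonical recollement
triangle of `U`; in particular `V ≅ j_* j^*(U)[-1]` and `i_*(C₁) ≅ i_* i^!(U)`. -/
theorem gluable_pair_triangle_canonical (R : Recollement T₁ T T₂) (C₁ : T₁) (C₂ : T₂)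
    (hC₁ : IsCosilting T₁ C₁) (hC₂ : IsCosilting T₂ C₂)
    (V U : T) (f : V ⟶ R.iS.obj C₁) (g : R.iS.obj C₁ ⟶ U) (w : U ⟶ V⟦(1 : ℤ)⟧)
    (hdist : Triangle.mk f g w ∈ distTriang T)
    (hV : V ∈ R.jS.obj '' perpGe T₂ C₂)
    (hU : U ∈ rightPerp T (R.jS.obj '' perpGe T₂ C₂)) :
    ∃ w' : R.jS.obj (R.jU.obj U) ⟶ (R.iS.obj (R.iE.obj U))⟦(1 : ℤ)⟧,
      (Triangle.mk (R.adj₂.counit.app U) (R.adj₄.unit.app U) w' ∈ distTriang T) ∧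
      Nonempty (Triangle.mk f g w ≅
        (invRotate T).obj (Triangle.mk (R.adj₂.counit.app U) (R.adj₄.unit.app U) w')) ∧
      Nonempty (V ≅ (R.jS.obj (R.jU.obj U))⟦(-1 : ℤ)⟧) ∧
      Nonempty (R.iS.obj C₁ ≅ R.iS.obj (R.iE.obj U)) := by
  classical
  -- Master vanishing: any map from `iS A` into something isomorphic to `jS B` is zero.
  have hzero : ∀ (A : T₁) (B : T₂) (f : R.iS.obj A ⟶ R.jS.obj B), f = 0 := by
    intro A B f
    exact (R.adj₂.homEquiv A (R.jS.obj B)).injective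
      ((R.iE_jS_zero B).eq_of_tgt _ _)
  have hzero' : ∀ (A : T₁) (B : T₂) (Z : T) (e : Z ≅ R.jS.obj B)
      (f : R.iS.obj A ⟶ Z), f = 0 := by
    intro A B Z e f
    have : f ≫ e.hom = 0 := hzero A B (f ≫ e.hom)
    calc f = (f ≫ e.hom) ≫ e.inv := by simp
    _ = 0 := by rw [this]; simp
  -- shifts of objects in the image of jS are in the image of jS up to iso
  have hshift : ∀ (B : T₂) (n : ℤ), ((R.jS.obj B)⟦n⟧ ≅ R.jS.obj (B⟦n⟧)) := by
    intro B n
    letI := R.jS_commShift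
    exact ((R.jS.commShiftIso n).app B).symm
  obtain ⟨V₂, _, hVeq⟩ := hV
  -- the canonical triangle of U
  obtain ⟨w', hw'⟩ := R.tri₁ U
  refine ⟨w', hw', ?_⟩
  set Δ₂ : Triangle T := Triangle.mk (R.adj₂.counit.app U) (R.adj₄.unit.app U) w' with hΔ₂
  have hΔ₂' : (invRotate T).obj Δ₂ ∈ distTriang T := inv_rot_of_distTriang _ hw'
  set Δ₁ : Triangle T := Triangle.mk f g w with hΔ₁
  -- factor g through the counit
  obtain ⟨α, hα⟩ := Triangle.coyoneda_exact₂ Δ₂ hw' g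
    (hzero _ (R.jU.obj U) _)
  -- factor the counit through g
  obtain ⟨β, hβ⟩ := Triangle.coyoneda_exact₃ Δ₁ hdist (R.adj₂.counit.app U)
    (hzero' (R.iE.obj U) (V₂⟦(1:ℤ)⟧) (V⟦(1:ℤ)⟧)
      ((shiftFunctor T (1:ℤ)).mapIso (eqToIso hVeq.symm) ≪≫ hshift V₂ 1) _)
  let α' : R.iS.obj C₁ ⟶ R.iS.obj (R.iE.obj U) := α
  let β' : R.iS.obj (R.iE.obj U) ⟶ R.iS.obj C₁ := β
  have hg : g = α' ≫ Δ₂.mor₁ := hα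
  have hε : Δ₂.mor₁ = β' ≫ g := hβ
  -- β' ≫ α' = 𝟙
  have hβα : β' ≫ α' = 𝟙 (R.iS.obj (R.iE.obj U)) := by
    have key : (β' ≫ α') ≫ Δ₂.mor₁ = 𝟙 (R.iS.obj (R.iE.obj U)) ≫ Δ₂.mor₁ := by
      exact (assoc β' α' Δ₂.mor₁).trans ((congrArg (β' ≫ ·) hg.symm).trans (hε.symm.trans (id_comp _).symm))
    have h1 : (β' ≫ α' - 𝟙 (R.iS.obj (R.iE.obj U))) ≫ ((invRotate T).obj Δ₂).mor₂ = 0 := by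
      show (β' ≫ α' - 𝟙 (R.iS.obj (R.iE.obj U))) ≫ Δ₂.mor₁ = 0
      exact (Preadditive.sub_comp _ _ _).trans (sub_eq_zero.mpr key)
    obtain ⟨γ, hγ⟩ := Triangle.coyoneda_exact₂ _ hΔ₂' _ h1
    have hγ0 : γ = 0 := hzero' (R.iE.obj U) ((R.jU.obj U)⟦(-1:ℤ)⟧) _
      (hshift (R.jU.obj U) (-1)) γ
    rw [hγ0, zero_comp] at hγ
    exact sub_eq_zero.mp hγ
  have hαβ : α' ≫ β' = 𝟙 (R.iS.obj C₁) := by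
    have h1 : (α' ≫ β' - 𝟙 (R.iS.obj C₁)) ≫ Δ₁.mor₂ = 0 := by
      show (α' ≫ β' - 𝟙 (R.iS.obj C₁)) ≫ g = 0
      rw [Preadditive.sub_comp, assoc, ← hε]; exact sub_eq_zero.mpr (hg.symm.trans (id_comp g).symm)
    obtain ⟨δ, hδ⟩ := Triangle.coyoneda_exact₂ _ hdist _ h1
    have hδ0 : δ = 0 := hzero' C₁ V₂ _ (eqToIso hVeq.symm) δ
    rw [hδ0, zero_comp] at hδ
    exact sub_eq_zero.mp hδ
  have hIsoα : IsIso α' := ⟨β', hαβ, hβα⟩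
  -- build the morphism of triangles
  obtain ⟨a, ha₁, ha₂⟩ := complete_distinguished_triangle_morphism₁ Δ₁
    ((invRotate T).obj Δ₂) hdist hΔ₂' α' (𝟙 U)
    (by show g ≫ 𝟙 U = α ≫ Δ₂.mor₁; rw [comp_id]; exact hg)
  let φ : Δ₁ ⟶ (invRotate T).obj Δ₂ :=
    { hom₁ := a, hom₂ := α', hom₃ := 𝟙 U,
      comm₁ := ha₁
      comm₂ := by show g ≫ 𝟙 U = α ≫ Δ₂.mor₁; rw [comp_id]; exact hg
      comm₃ := ha₂ }
  have h3 : IsIso φ.hom₃ := inferInstanceAs (IsIso (𝟙 U))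
  have h2 : IsIso φ.hom₂ := hIsoα
  have h1 : IsIso φ.hom₁ := isIso₁_of_isIso₂₃ φ hdist hΔ₂' h2 h3
  have hφ : IsIso φ := Triangle.isIso_of_isIsos φ h1 h2 h3
  refine ⟨⟨asIso φ⟩, ⟨?_⟩, ⟨asIso α'⟩⟩
  exact (Triangle.π₁.mapIso (asIso φ))
end Statement
end

section
/- Existence of the gluing triangle from an adjacent co-t-structure: let the recollement (T₁, T, T₂) extend one step downwards to a ladder of height 2, i.e. there are additional functors i_# ⊣ i^* and j^# ⊣ j_* making (T₂, T, T₁) a recollement with the roles exchanged. Let C₁, C₂ be cosilting in T₁, T₂ and suppose the t-structure (^{⊥_{<0}}C₂, ^{⊥_{>0}}C₂) has an adjacent co-t-structure (^{⊥_{>0}}C₂, (^{⊥_{≥0}}C₂)^⊥). Then i_*(C₁) admits a triangle V → i_*(C₁) → U → V[1] with V ∈ j_*(^{⊥_{≥0}}C₂) and U ∈ (j_*(^{⊥_{≥0}}C₂))^⊥, i.e. (C₁, C₂) is a gluable cosilting pair. -/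
open CategoryTheory Category Limits Pretriangulated

universe v u

section AuxPerp

variable {C : Type u} [Category.{v} C] [HasZeroObject C] [HasShift C ℤ] [Preadditive C]
  [∀ n : ℤ, (CategoryTheory.shiftFunctor C n).Additive] [Pretriangulated C]

/-- The aisle of the adjacent co-`t`-structure, i.e. `(^{⊥_{>0}}M)[-1]`, is contained
in `^{⊥_{≥0}}M`. -/
lemma mem_perpGe_of_mem_shiftSet_perpGt {M X : C}
    (h : X ∈ shiftSet C (perpGt C M) (-1)) : X ∈ perpGe C M := by
  have h' : X⟦(1 : ℤ)⟧ ∈ perpGt C M := by simpa [shiftSet] using h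
  intro k hk f
  have hz : (shiftFunctor C (1 : ℤ)).map f ≫
      (shiftFunctorAdd' C k 1 (k + 1) rfl).inv.app M = 0 :=
    h' (k + 1) (by omega) _
  have hz' : (shiftFunctor C (1 : ℤ)).map f = 0 := by
    have := congrArg (fun g => g ≫ (shiftFunctorAdd' C k 1 (k + 1) rfl).hom.app M) hz
    simpa using this
  apply (shiftFunctor C (1 : ℤ)).map_injective
  rw [hz', Functor.map_zero]

end AuxPerp

section Statement

variable (T₁ : Type u) [Category.{v} T₁] [HasZeroObject T₁] [HasShift T₁ ℤ] [Preadditive T₁]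
  [∀ n : ℤ, (CategoryTheory.shiftFunctor T₁ n).Additive] [Pretriangulated T₁]
variable (T : Type u) [Category.{v} T] [HasZeroObject T] [HasShift T ℤ] [Preadditive T]
  [∀ n : ℤ, (CategoryTheory.shiftFunctor T n).Additive] [Pretriangulated T]
variable (T₂ : Type u) [Category.{v} T₂] [HasZeroObject T₂] [HasShift T₂ ℤ] [Preadditive T₂]
  [∀ n : ℤ, (CategoryTheory.shiftFunctor T₂ n).Additive] [Pretriangulated T₂]

/-- If the recollement extends to a ladder of height 2 and the `t`-structure of `C₂` has an
adjacent co-`t`-structure, then `(C₁, C₂)` is a gluable cosilting pair. -/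
theorem gluable_of_adjacent_coTStructure
    (R : Recollement T₁ T T₂) (R' : Recollement T₂ T T₁)
    (hl₁ : R'.iU = R.jU) (hl₂ : R'.iS = R.jS) (hl₃ : R'.jE = R.iS) (hl₄ : R'.jU = R.iE)
    (C₁ : T₁) (C₂ : T₂) (hC₁ : IsCosilting T₁ C₁) (hC₂ : IsCosilting T₂ C₂)
    (hadj : IsCoTStructure T₂ (perpGt T₂ C₂) (rightPerp T₂ (perpGe T₂ C₂))) :
    ∃ (V U : T) (f : V ⟶ R.iS.obj C₁) (g : R.iS.obj C₁ ⟶ U) (w : U ⟶ V⟦(1 : ℤ)⟧),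
      (Triangle.mk f g w ∈ distTriang T) ∧
      V ∈ R.jS.obj '' perpGe T₂ C₂ ∧
      U ∈ rightPerp T (R.jS.obj '' perpGe T₂ C₂) := by
  letI := R'.iS_commShift
  letI : R'.iS.IsTriangulated := R'.iS_triangulated
  letI := R'.jS_commShift
  letI : R'.jS.IsTriangulated := R'.jS_triangulated
  letI : R'.iS.Full := R'.iS_full
  letI : R'.iS.Faithful := R'.iS_faithful
  rw [← hl₂]
  -- the second recollement triangle `jS (j^♯ X) → X → k (i^! X)` at `X = iS C₁`
  obtain ⟨h₂, hΔ₂⟩ := R'.tri₁ (R.iS.obj C₁)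
  set Δ₂ : Triangle T := Triangle.mk (R'.adj₂.counit.app (R.iS.obj C₁))
    (R'.adj₄.unit.app (R.iS.obj C₁)) h₂ with hΔ₂def
  -- torsion decomposition of `j^♯ X` with respect to the adjacent co-`t`-structure
  obtain ⟨a, b, ha, hb, f₀, g₀, h₀, hT₀⟩ :=
    hadj.torsion.exists_triangle (R'.iE.obj (R.iS.obj C₁))
  have haGe : a ∈ perpGe T₂ C₂ := mem_perpGe_of_mem_shiftSet_perpGt ha
  -- map it to `T` via `jS = R'.iS`
  set Δ₁ : Triangle T := R'.iS.mapTriangle.obj (Triangle.mk f₀ g₀ h₀) with hΔ₁def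
  have hΔ₁ : Δ₁ ∈ distTriang T := R'.iS.map_distinguished _ hT₀
  -- cone of the composite map `jS a → X`
  obtain ⟨U, p, q, hΔ₃⟩ :=
    Pretriangulated.distinguished_cocone_triangle (Δ₁.mor₁ ≫ Δ₂.mor₁)
  -- TR3 morphisms of triangles
  obtain ⟨φ, hφ₁, hφ₂⟩ := complete_distinguished_triangle_morphism Δ₁
    (Triangle.mk (Δ₁.mor₁ ≫ Δ₂.mor₁) p q) hΔ₁ hΔ₃ (𝟙 _) Δ₂.mor₁ (by exact (id_comp _).symm)
  obtain ⟨ψ, hψ₁, hψ₂⟩ := complete_distinguished_triangle_morphism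
    (Triangle.mk (Δ₁.mor₁ ≫ Δ₂.mor₁) p q) Δ₂ hΔ₃ hΔ₂ Δ₁.mor₁ (𝟙 _) (by exact comp_id _)
  -- vanishing of maps from `jS (perpGe C₂)` to `jS b`
  have hF : ∀ (Y : T₂), Y ∈ perpGe T₂ C₂ → ∀ u : R'.iS.obj Y ⟶ R'.iS.obj b, u = 0 := by
    intro Y hY u
    obtain ⟨g, rfl⟩ := R'.iS.map_surjective u
    rw [hb Y hY g, Functor.map_zero]
  -- vanishing of maps from `jS Y` to `k W` (using `i^! ∘ jS = 0`)
  have hG : ∀ (Y : T₂) (W : T) (u : R'.iS.obj Y ⟶ R'.jS.obj (R'.jU.obj W)), u = 0 := by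
    intro Y W u
    have hzero : IsZero (R'.jU.obj (R'.iS.obj Y)) := by
      rw [hl₄, hl₂]; exact R.iE_jS_zero Y
    have hv : (R'.adj₄.homEquiv _ _).symm u = 0 := hzero.eq_of_src _ _
    have hu := congrArg (R'.adj₄.homEquiv (R'.iS.obj Y) (R'.jU.obj W)) hv
    rw [Equiv.apply_symm_apply] at hu
    rw [hu, Adjunction.homEquiv_unit, Functor.map_zero, comp_zero]
  refine ⟨R'.iS.obj a, U, Δ₁.mor₁ ≫ Δ₂.mor₁, p, q, hΔ₃, ⟨a, haGe, rfl⟩, ?_⟩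
  rintro _ ⟨Y, hY, rfl⟩ u
  -- diagram chase replacing the octahedral axiom
  have h1 : u ≫ ψ = 0 := hG Y _ (u ≫ ψ)
  have hψ₂' : q ≫ (shiftFunctor T (1 : ℤ)).map Δ₁.mor₁ = ψ ≫ Δ₂.mor₃ := hψ₂
  have h2 : (u ≫ q) ≫ (shiftFunctor T (1 : ℤ)).map Δ₁.mor₁ = 0 := by
    rw [assoc, hψ₂']; exact (assoc _ _ _).symm.trans (by rw [h1]; exact zero_comp)
  obtain ⟨v, hv⟩ := Triangle.coyoneda_exact₁ _ hΔ₁ (u ≫ q) h2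
  have h3 : u ≫ q = 0 := by
    rw [hv, hF Y hY v]; exact zero_comp
  obtain ⟨w, hw⟩ := Triangle.coyoneda_exact₃ _ hΔ₃ u h3
  have hwp : u = w ≫ p := hw
  have hψ₁' : p ≫ ψ = Δ₂.mor₂ := by exact hψ₁.trans (id_comp _)
  have h4 : w ≫ Δ₂.mor₂ = 0 := by
    rw [← hψ₁']; exact (assoc _ _ _).symm.trans (by rw [← hwp, h1])
  obtain ⟨z, hz⟩ := Triangle.coyoneda_exact₂ _ hΔ₂ w h4
  have hφ₁' : Δ₂.mor₁ ≫ p = Δ₁.mor₂ ≫ φ := by exact hφ₁.symm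
  calc u = w ≫ p := hwp
    _ = (z ≫ Δ₂.mor₁) ≫ p := by exact congrArg (· ≫ p) hz
    _ = (z ≫ (Δ₁.mor₂ ≫ φ) : R'.iS.obj Y ⟶ U) := by exact (assoc _ _ _).trans (congrArg (z ≫ ·) hφ₁')
    _ = ((z ≫ Δ₁.mor₂) ≫ φ : R'.iS.obj Y ⟶ U) := by exact (assoc _ _ _).symm
    _ = 0 := by exact (congrArg (· ≫ φ) (hF Y hY (z ≫ Δ₁.mor₂))).trans zero_comp

end Statement
end

section
/- Let A, B, C be rings forming a ladder of height 2 of derived categories D(A), D(B), D(C) (with functors i^*, i_*, i^!, i_# between D(A) and D(B), and j_!, j^*, j_*, j^# between D(B) and D(C), each preserving the relevant structures). Let Y_C ⊆ D(C) and Y_A ⊆ D(A) be full subcategories and define Y_B = {Y ∈ D(B) : j^*(Y) ∈ Y_C, i^!(Y) ∈ Y_A}. If there exist integers n₁ ≤ m₁ and n₂ ≤ m₂ with D^{≥m₁}(A) ⊆ Y_A ⊆ D^{≥n₁}(A) and D^{≥m₂}(C) ⊆ Y_C ⊆ D^{≥n₂}(C) (cointermediate), then Y_B is cointermediate in D(B):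 there exist integers n ≤ m with D^{≥m}(B) ⊆ Y_B ⊆ D^{≥n}(B). Explicitly, if i_*(A) ∈ K^{[s₁,s₂]}(B-proj), j_!(C) ∈ K^{[u₁,u₂]}(B-proj), i^*(B) ∈ K^{[t₁,t₂]}(A-proj), j^*(B) ∈ K^{[v₁,v₂]}(C-proj), one may take m = max{m₁+s₂, m₂+u₂} and n = min{n₁−t₂, n₂−v₂}. -/
open CategoryTheory Category Limits Pretriangulated

universe v u

private lemma aux_homEquiv_eq_zero {C D : Type*} [Category C] [Category D]
    [Preadditive C] [Preadditive D]
    {F : C ⥤ D} {G : D ⥤ C} (adj : F ⊣ G) [G.Additive] {A : C} {Y : D}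
    (x : A ⟶ G.obj Y) (h : (adj.homEquiv A Y).symm x = 0) : x = 0 := by
  have hx := (adj.homEquiv A Y).apply_symm_apply x
  rw [h, Adjunction.homEquiv_unit, G.map_zero, comp_zero] at hx
  exact hx.symm

section Statement

variable (T₁ : Type u) [Category.{v} T₁] [HasZeroObject T₁] [HasShift T₁ ℤ] [Preadditive T₁]
  [∀ n : ℤ, (CategoryTheory.shiftFunctor T₁ n).Additive] [Pretriangulated T₁]
variable (T : Type u) [Category.{v} T] [HasZeroObject T] [HasShift T ℤ] [Preadditive T]
  [∀ n : ℤ, (CategoryTheory.shiftFunctor T n).Additive] [Pretriangulated T]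
variable (T₂ : Type u) [Category.{v} T₂] [HasZeroObject T₂] [HasShift T₂ ℤ] [Preadditive T₂]
  [∀ n : ℤ, (CategoryTheory.shiftFunctor T₂ n).Additive] [Pretriangulated T₂]

/-- Gluing cointermediate subcategories along a ladder of height 2 of derived categories:
`T₁, T, T₂` play the roles of `D(A), D(B), D(C)` with `ringA, ringB, ringC` the rings viewed
as compact generators, `DGE` the standard coaisles `D^{≥n}`, and the `hbound` hypotheses
encoding `i_*(A) ∈ K^{[s₁,s₂]}(B-proj)`, `j_!(C) ∈ K^{[u₁,u₂]}(B-proj)`,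
`i^*(B) ∈ K^{[t₁,t₂]}(A-proj)`, `j^*(B) ∈ K^{[v₁,v₂]}(C-proj)`. -/
theorem glued_cointermediate
    (R : Recollement T₁ T T₂) (R' : Recollement T₂ T T₁)
    (hl₁ : R'.iU = R.jU) (hl₂ : R'.iS = R.jS) (hl₃ : R'.jE = R.iS) (hl₄ : R'.jU = R.iE)
    (ringA : T₁) (ringB : T) (ringC : T₂) (YA : Set T₁) (YC : Set T₂)
    (s₂ u₂ t₂ v₂ n₁ m₁ n₂ m₂ : ℤ) (hn₁ : n₁ ≤ m₁) (hn₂ : n₂ ≤ m₂)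
    (hYA₁ : DGE T₁ ringA m₁ ⊆ YA) (hYA₂ : YA ⊆ DGE T₁ ringA n₁)
    (hYC₁ : DGE T₂ ringC m₂ ⊆ YC) (hYC₂ : YC ⊆ DGE T₂ ringC n₂)
    (hbound_isA : ∀ (k i : ℤ) (Z : T), Z ∈ DGE T ringB k → i < k - s₂ →
      ∀ φ : R.iS.obj ringA ⟶ Z⟦i⟧, φ = 0)
    (hbound_jC : ∀ (k i : ℤ) (Z : T), Z ∈ DGE T ringB k → i < k - u₂ →
      ∀ φ : R.jE.obj ringC ⟶ Z⟦i⟧, φ = 0)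
    (hbound_iB : ∀ (k i : ℤ) (Z : T₁), Z ∈ DGE T₁ ringA k → i < k - t₂ →
      ∀ φ : R.iU.obj ringB ⟶ Z⟦i⟧, φ = 0)
    (hbound_jB : ∀ (k i : ℤ) (Z : T₂), Z ∈ DGE T₂ ringC k → i < k - v₂ →
      ∀ φ : R.jU.obj ringB ⟶ Z⟦i⟧, φ = 0) :
    DGE T ringB (max (m₁ + s₂) (m₂ + u₂)) ⊆
      {Z : T | R.jU.obj Z ∈ YC ∧ R.iE.obj Z ∈ YA} ∧
    {Z : T | R.jU.obj Z ∈ YC ∧ R.iE.obj Z ∈ YA} ⊆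
      DGE T ringB (min (n₁ - t₂) (n₂ - v₂)) := by
  letI := R.iS_commShift; letI := R.iU_commShift; letI := R.iE_commShift
  letI := R.jE_commShift; letI := R.jU_commShift; letI := R.jS_commShift
  haveI := R.iS_triangulated; haveI := R.iE_triangulated
  haveI := R.jU_triangulated; haveI := R.jS_triangulated
  constructor
  · intro Z hZ
    constructor
    · apply hYC₁
      intro i hi f
      let e := (R.jU.commShiftIso (i : ℤ)).app Z
      have hφ : (R.adj₃.homEquiv ringC (Z⟦i⟧)).symm (f ≫ e.inv) = 0 :=
        hbound_jC _ i Z hZ (by omega) _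
      have h0 : f ≫ e.inv = 0 := aux_homEquiv_eq_zero R.adj₃ _ hφ
      calc f = (f ≫ e.inv) ≫ e.hom := by simp
        _ = 0 := by rw [h0, zero_comp]
    · apply hYA₁
      intro i hi f
      let e := (R.iE.commShiftIso (i : ℤ)).app Z
      have hφ : (R.adj₂.homEquiv ringA (Z⟦i⟧)).symm (f ≫ e.inv) = 0 :=
        hbound_isA _ i Z hZ (by omega) _
      have h0 : f ≫ e.inv = 0 := aux_homEquiv_eq_zero R.adj₂ _ hφ
      calc f = (f ≫ e.inv) ≫ e.hom := by simp
        _ = 0 := by rw [h0, zero_comp]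
  · rintro Z ⟨hZC, hZA⟩ i hi f
    obtain ⟨h, hT⟩ := R.tri₁ (Z⟦i⟧)
    -- step 1 : f ≫ unit = 0
    have step1 : f ≫ R.adj₄.unit.app (Z⟦i⟧) = 0 := by
      apply aux_homEquiv_eq_zero R.adj₄
      set ψ := (R.adj₄.homEquiv ringB (R.jU.obj (Z⟦i⟧))).symm
        (f ≫ R.adj₄.unit.app (Z⟦i⟧)) with hψ
      let e := (R.jU.commShiftIso (i : ℤ)).app Z
      have hz : ψ ≫ e.hom = 0 :=
        hbound_jB n₂ i (R.jU.obj Z) (hYC₂ hZC) (by omega) _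
      calc ψ = (ψ ≫ e.hom) ≫ e.inv := by simp
        _ = 0 := by rw [hz, zero_comp]
    obtain ⟨f', hf'⟩ := Pretriangulated.Triangle.coyoneda_exact₂ _ hT f step1
    have hf'0 : f' = 0 := by
      apply aux_homEquiv_eq_zero R.adj₁
      set ψ := (R.adj₁.homEquiv ringB (R.iE.obj (Z⟦i⟧))).symm f' with hψ
      let e := (R.iE.commShiftIso (i : ℤ)).app Z
      have hz : ψ ≫ e.hom = 0 :=
        hbound_iB n₁ i (R.iE.obj Z) (hYA₂ hZA) (by omega) _
      calc ψ = (ψ ≫ e.hom) ≫ e.inv := by simp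
        _ = 0 := by rw [hz, zero_comp]
    rw [hf', hf'0, zero_comp]
    rfl


end Statement
end

section
/- In the setting of Theorem on gluing (Lemma 'for glue torsion pair'), let C = j_*(C₂) ⊕ U be the glued cosilting object with heart H and let X ∈ H. (1) Hom_T(X, j_* j^*(U)[-1]) = 0; and if Hom_T(X, U) = 0 then Hom_T(X, i_* i^!(U)) = 0. (3) If moreover Hom_T(X, j_*(C₂)) = 0, then for any U₀ ∈ Prod(U): Hom_T(X, i_* i^!(U₀)) = 0 if and only if Hom_T(X, U₀) = 0. -/
open CategoryTheory Category Limits Pretriangulated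

universe v u

section Helpers

variable {T : Type u} [Category.{v} T] [Preadditive T]

lemma hom_zero_of_fan_retract (G : T ⥤ T) [PreservesLimitsOfSize.{v, v} G]
    {A X U₀ : T} {ι : Type v} (c : Fan (fun _ : ι => A)) (hc : IsLimit c)
    (hr : IsRetract U₀ c.pt) (h : ∀ φ : X ⟶ G.obj A, φ = 0) :
    ∀ φ : X ⟶ G.obj U₀, φ = 0 := by
  obtain ⟨s, r, hsr⟩ := hr
  have hpt : ∀ ψ : X ⟶ G.obj c.pt, ψ = 0 := by
    intro ψ
    have hc' := isLimitOfPreserves G hc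
    apply hc'.hom_ext
    intro j
    have h1 : ψ ≫ G.map (c.π.app j) = 0 := h _
    simp only [Functor.mapCone_π_app, zero_comp]
    exact h1
  intro φ
  have : φ = (φ ≫ G.map s) ≫ G.map r := by
    rw [assoc, ← G.map_comp, hsr, G.map_id, comp_id]
  rw [this, hpt (φ ≫ G.map s), zero_comp]

end Helpers

section Statement

variable (T₁ : Type u) [Category.{v} T₁] [HasZeroObject T₁] [HasShift T₁ ℤ] [Preadditive T₁]
  [∀ n : ℤ, (CategoryTheory.shiftFunctor T₁ n).Additive] [Pretriangulated T₁]
variable (T : Type u) [Category.{v} T] [HasZeroObject T] [HasShift T ℤ] [Preadditive T]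
  [∀ n : ℤ, (CategoryTheory.shiftFunctor T n).Additive] [Pretriangulated T]
variable (T₂ : Type u) [Category.{v} T₂] [HasZeroObject T₂] [HasShift T₂ ℤ] [Preadditive T₂]
  [∀ n : ℤ, (CategoryTheory.shiftFunctor T₂ n).Additive] [Pretriangulated T₂]

/-- Lemma "for glue torsion pair": parts (1) and (3), for `X` in the heart of the glued
cosilting object `C = j_*(C₂) ⊞ U`. -/
theorem glue_torsion_pair_lemma [HasBinaryBiproducts T]
    (R : Recollement T₁ T T₂) (C₁ : T₁) (C₂ : T₂)
    (hC₁ : IsCosilting T₁ C₁) (hC₂ : IsCosilting T₂ C₂)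
    (V U : T) (f : V ⟶ R.iS.obj C₁) (g : R.iS.obj C₁ ⟶ U) (w : U ⟶ V⟦(1 : ℤ)⟧)
    (hdist : Triangle.mk f g w ∈ distTriang T)
    (hV : V ∈ R.jS.obj '' perpGe T₂ C₂)
    (hU : U ∈ rightPerp T (R.jS.obj '' perpGe T₂ C₂))
    (hC : IsCosilting T (R.jS.obj C₂ ⊞ U))
    (hglueGt : perpGt T (R.jS.obj C₂ ⊞ U) =
      {Z : T | R.iE.obj Z ∈ perpGt T₁ C₁ ∧ R.jU.obj Z ∈ perpGt T₂ C₂})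
    (hglueLt : perpLt T (R.jS.obj C₂ ⊞ U) =
      {Z : T | R.iU.obj Z ∈ perpLt T₁ C₁ ∧ R.jU.obj Z ∈ perpLt T₂ C₂})
    (X : T) (hX : X ∈ perpLt T (R.jS.obj C₂ ⊞ U) ∩ perpGt T (R.jS.obj C₂ ⊞ U))
    (h2 : (∀ φ : X ⟶ R.jS.obj C₂, φ = 0) → ∀ φ : X ⟶ R.jS.obj (R.jU.obj U), φ = 0) :
    (∀ φ : X ⟶ (R.jS.obj (R.jU.obj U))⟦(-1 : ℤ)⟧, φ = 0) ∧
    ((∀ φ : X ⟶ U, φ = 0) → ∀ φ : X ⟶ R.iS.obj (R.iE.obj U), φ = 0) ∧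
    ((∀ φ : X ⟶ R.jS.obj C₂, φ = 0) → ∀ U₀ ∈ ProdClass T U,
      ((∀ φ : X ⟶ R.iS.obj (R.iE.obj U₀), φ = 0) ↔ (∀ φ : X ⟶ U₀, φ = 0))) := by
  letI := R.jU_commShift
  letI := R.jS_commShift
  haveI := R.jU_triangulated
  haveI := R.jS_triangulated
  haveI := R.jS_full
  haveI := R.jS_faithful
  -- membership of `jU X` in the aisle for `C₂`
  have hXlt := hX.1
  rw [hglueLt] at hXlt
  have hjXlt : R.jU.obj X ∈ perpLt T₂ C₂ := hXlt.2
  obtain ⟨W, hW, rfl⟩ := hV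
  -- key shift computation for objects of `perpGe C₂`
  haveI : (shiftEquiv T₂ (1 : ℤ)).functor.Additive :=
    (inferInstance : (shiftFunctor T₂ (1 : ℤ)).Additive)
  have keyW : ∀ (B : T₂), B ∈ perpGe T₂ C₂ → ∀ (k : ℤ), 0 < k →
      ∀ f : B⟦(1 : ℤ)⟧ ⟶ C₂⟦k⟧, f = 0 := by
    intro B hB k hk f
    have adjS := (shiftEquiv T₂ (1 : ℤ)).toAdjunction
    have e := (shiftFunctorAdd' T₂ k (-1) (k - 1) (by omega)).app C₂
    have ht0 : adjS.homEquiv B (C₂⟦k⟧) f = 0 := by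
      apply (cancel_mono e.inv).1
      exact (hB (k - 1) (by omega) _).trans zero_comp.symm
    have h0 : adjS.homEquiv B (C₂⟦k⟧) 0 = 0 := by
      rw [adjS.homEquiv_unit, Functor.map_zero, comp_zero]
    exact (adjS.homEquiv B (C₂⟦k⟧)).injective (ht0.trans h0.symm)
  -- `jU (iS C₁)` is trivial
  have hid : (𝟙 (R.jU.obj (R.iS.obj C₁)) : _) = 0 := by
    apply ((R.adj₄.homEquiv (R.iS.obj C₁) (R.jU.obj (R.iS.obj C₁))).trans
      (R.adj₂.homEquiv C₁ (R.jS.obj (R.jU.obj (R.iS.obj C₁))))).injective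
    exact (R.iE_jS_zero _).eq_of_tgt _ _
  -- `jU (jS W)` lies in the shifted coaisle for `C₂`
  have hmemW : R.jU.obj (R.jS.obj W) ∈ shiftSet T₂ (perpGt T₂ C₂) (-1) := by
    simp only [shiftSet, perpGt, Set.mem_setOf_eq, neg_neg]
    intro k hk f
    have h1 : (shiftFunctor T₂ (1 : ℤ)).map (inv (R.adj₄.counit.app W)) ≫ f = 0 :=
      keyW W hW k hk _
    rw [← cancel_epi ((shiftFunctor T₂ (1 : ℤ)).map (inv (R.adj₄.counit.app W))), comp_zero]
    exact h1
  have hHomV : ∀ q : R.jU.obj X ⟶ R.jU.obj (R.jS.obj W), q = 0 :=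
    fun q => hC₂.torsion.hom_zero hjXlt hmemW q
  -- applying `jU` to the gluing triangle
  have hTri := R.jU.map_distinguished _ hdist
  have hψ : ∀ ψ : R.jU.obj X ⟶ (R.jU.obj U)⟦(-1 : ℤ)⟧, ψ = 0 := by
    intro ψ
    have hinv2 := inv_rot_of_distTriang _ (inv_rot_of_distTriang _ hTri)
    obtain ⟨g', hg'⟩ := Triangle.coyoneda_exact₂ _ hinv2 ψ (hHomV _)
    have hzero : ∀ q : R.jU.obj X ⟶ (R.jU.obj (R.iS.obj C₁))⟦(-1 : ℤ)⟧, q = 0 := by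
      intro q
      have h1 : (𝟙 ((R.jU.obj (R.iS.obj C₁))⟦(-1 : ℤ)⟧) : _) = 0 := by
        rw [← (shiftFunctor T₂ (-1 : ℤ)).map_id, hid, Functor.map_zero]
      rw [← comp_id q, h1, comp_zero]
    rw [hg', hzero g']
    exact zero_comp
  -- Part (1a)
  have part1a : ∀ φ : X ⟶ (R.jS.obj (R.jU.obj U))⟦(-1 : ℤ)⟧, φ = 0 := by
    intro φ
    have e : R.jS.obj ((R.jU.obj U)⟦(-1 : ℤ)⟧) ≅ (R.jS.obj (R.jU.obj U))⟦(-1 : ℤ)⟧ :=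
      (R.jS.commShiftIso (-1 : ℤ)).app (R.jU.obj U)
    have hφe : φ ≫ e.inv = 0 := by
      have ψ0 : (R.adj₄.homEquiv X ((R.jU.obj U)⟦(-1 : ℤ)⟧)).symm (φ ≫ e.inv) = 0 := hψ _
      calc φ ≫ e.inv
          = (R.adj₄.homEquiv X ((R.jU.obj U)⟦(-1 : ℤ)⟧))
            ((R.adj₄.homEquiv X ((R.jU.obj U)⟦(-1 : ℤ)⟧)).symm (φ ≫ e.inv)) :=
            (Equiv.apply_symm_apply _ _).symm
        _ = (R.adj₄.homEquiv X ((R.jU.obj U)⟦(-1 : ℤ)⟧)) 0 := by rw [ψ0]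
        _ = R.adj₄.unit.app X ≫ R.jS.map 0 := R.adj₄.homEquiv_unit _ _ 0
        _ = 0 := by rw [Functor.map_zero, comp_zero]
    calc φ = (φ ≫ e.inv) ≫ e.hom := by rw [assoc, e.inv_hom_id, comp_id]
      _ = 0 := by rw [hφe, zero_comp]
  refine ⟨part1a, ?_, ?_⟩
  · -- Part (1b)
    intro hU0 φ
    obtain ⟨h₁, hd₁⟩ := R.tri₁ U
    obtain ⟨g₁, hg₁⟩ :=
      Triangle.coyoneda_exact₂ _ (inv_rot_of_distTriang _ hd₁) φ (hU0 _)
    rw [hg₁, part1a g₁]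
    exact zero_comp
  · -- Part (3)
    intro hjc U₀ hU₀
    obtain ⟨ι, c, ⟨hc⟩, hr⟩ := hU₀
    have hA : ∀ φ : X ⟶ R.jS.obj (R.jU.obj U), φ = 0 := h2 hjc
    haveI : PreservesLimitsOfSize.{v, v} R.jU := R.adj₃.rightAdjoint_preservesLimits
    haveI : PreservesLimitsOfSize.{v, v} R.jS := R.adj₄.rightAdjoint_preservesLimits
    have hA₀ : ∀ φ : X ⟶ (R.jU ⋙ R.jS).obj U₀, φ = 0 :=
      hom_zero_of_fan_retract (R.jU ⋙ R.jS) c hc hr hA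
    have hB₀ : ∀ φ : X ⟶ ((R.jU ⋙ R.jS) ⋙ shiftFunctor T (-1 : ℤ)).obj U₀, φ = 0 :=
      hom_zero_of_fan_retract ((R.jU ⋙ R.jS) ⋙ shiftFunctor T (-1 : ℤ)) c hc hr part1a
    obtain ⟨h₀, hd₀⟩ := R.tri₁ U₀
    constructor
    · intro hI φ
      obtain ⟨g₀, hg₀⟩ := Triangle.coyoneda_exact₂ _ hd₀ φ (hA₀ _)
      rw [hg₀, hI g₀]
      exact zero_comp
    · intro hU0 φ
      obtain ⟨g₀, hg₀⟩ :=
        Triangle.coyoneda_exact₂ _ (inv_rot_of_distTriang _ hd₀) φ (hU0 _)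
      rw [hg₀, hB₀ g₀]
      exact zero_comp


end Statement
end
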